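/- A smooth immersion i : U → ℝ³ (U ⊆ ℝ² open, connected) with first fundamental form g_ij = E·δ_ij, E > 0 harmonic, and second fundamental form l_ij = e·δ_ij has constant first fundamental form; in particular the metric E·(du² + dv²) is flat (its Gaussian curvature K = -(1/(2E))·Δ(log E) vanishes). -/

import Mathlib

open RealInnerProductSpace

abbrev E3 := EuclideanSpace ℝ (Fin 3)

noncomputable def pdu (f : ℝ × ℝ → ℝ) : ℝ × ℝ → ℝ := fun p => fderiv ℝ f p (1, 0)
noncomputable def pdv (f : ℝ × ℝ → ℝ) : ℝ × ℝ → ℝ := fun p => fderiv ℝ f p (0, 1)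
noncomputable def pduV (f : ℝ × ℝ → E3) : ℝ × ℝ → E3 := fun p => fderiv ℝ f p (1, 0)
noncomputable def pdvV (f : ℝ × ℝ → E3) : ℝ × ℝ → E3 := fun p => fderiv ℝ f p (0, 1)

set_option maxHeartbeats 2000000

section PD
variable {F : Type*} [NormedAddCommGroup F] [NormedSpace ℝ F]

noncomputable def pd (w : ℝ × ℝ) (g : ℝ × ℝ → F) : ℝ × ℝ → F := fun p => fderiv ℝ g p w

variable {U : Set (ℝ × ℝ)} {g h : ℝ × ℝ → F} {p : ℝ × ℝ} {w w₁ w₂ : ℝ × ℝ}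

theorem pd_congr (hU : IsOpen U) (hgh : ∀ q ∈ U, g q = h q) (hp : p ∈ U) :
    pd w g p = pd w h p := by
  have : g =ᶠ[nhds p] h := Filter.eventuallyEq_of_mem (hU.mem_nhds hp) hgh
  simp only [pd, this.fderiv_eq]

theorem pd_contDiffOn (hU : IsOpen U) (hg : ContDiffOn ℝ (⊤ : ℕ∞) g U) :
    ContDiffOn ℝ (⊤ : ℕ∞) (pd w g) U :=
  (hg.fderiv_of_isOpen hU (by simp)).clm_apply contDiffOn_const

theorem ContDiffOn.diffAt (hg : ContDiffOn ℝ (⊤ : ℕ∞) g U) (hU : IsOpen U) (hp : p ∈ U) :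
    DifferentiableAt ℝ g p :=
  (hg.contDiffAt (hU.mem_nhds hp)).differentiableAt (by simp)

theorem pd_symm (hU : IsOpen U) (hg : ContDiffOn ℝ (⊤ : ℕ∞) g U) (hp : p ∈ U) :
    pd w₁ (pd w₂ g) p = pd w₂ (pd w₁ g) p := by
  have hsymm : IsSymmSndFDerivAt ℝ g p :=
    (hg.contDiffAt (hU.mem_nhds hp)).isSymmSndFDerivAt (by norm_num; exact WithTop.coe_le_coe.2 le_top)
  have hd : DifferentiableAt ℝ (fderiv ℝ g) p := by
    have : ContDiffAt ℝ (⊤ : ℕ∞) (fderiv ℝ g) p :=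
      ((hg.fderiv_of_isOpen hU (by simp)).contDiffAt (hU.mem_nhds hp))
    exact this.differentiableAt (by simp)
  have h1 : ∀ w : ℝ × ℝ, ∀ v, pd w (pd v g) p = fderiv ℝ (fderiv ℝ g) p w v := by
    intro w v
    show fderiv ℝ (fun q => fderiv ℝ g q v) p w = _
    rw [fderiv_clm_apply hd (differentiableAt_const v)]
    simp
  rw [h1, h1, hsymm.eq]

theorem pd_zero (c : F) : pd w (fun _ => c) p = 0 := by
  simp [pd]

end PD

section PDR
variable {U : Set (ℝ × ℝ)} {g h : ℝ × ℝ → ℝ} {p : ℝ × ℝ} {w : ℝ × ℝ}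

theorem pd_mul (hg : DifferentiableAt ℝ g p) (hh : DifferentiableAt ℝ h p) :
    pd w (fun q => g q * h q) p = pd w g p * h p + g p * pd w h p := by
  show fderiv ℝ (fun q => g q * h q) p w = _
  rw [fderiv_fun_mul hg hh]
  simp [smul_eq_mul, pd]
  ring

theorem pd_add (hg : DifferentiableAt ℝ g p) (hh : DifferentiableAt ℝ h p) :
    pd w (fun q => g q + h q) p = pd w g p + pd w h p := by
  show fderiv ℝ (fun q => g q + h q) p w = _
  rw [fderiv_fun_add hg hh]
  rfl

theorem pd_const_mul (c : ℝ) (hg : DifferentiableAt ℝ g p) :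
    pd w (fun q => c * g q) p = c * pd w g p := by
  show fderiv ℝ (fun q => c * g q) p w = _
  rw [fderiv_const_mul hg c]
  rfl

end PDR

section PDI
variable {U : Set (ℝ × ℝ)} {g h : ℝ × ℝ → E3} {r : ℝ × ℝ → ℝ} {p : ℝ × ℝ}

theorem pd_inner_eq (hU : IsOpen U) (hg : ContDiffOn ℝ (⊤ : ℕ∞) g U) (hh : ContDiffOn ℝ (⊤ : ℕ∞) h U)
    (hr : ∀ q ∈ U, ⟪g q, h q⟫ = r q) (hp : p ∈ U) (w : ℝ × ℝ) :
    ⟪g p, pd w h p⟫ + ⟪pd w g p, h p⟫ = pd w r p := by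
  have h1 : pd w (fun q => ⟪g q, h q⟫) p = pd w r p := pd_congr hU hr hp
  rw [← h1]
  exact (fderiv_inner_apply (𝕜 := ℝ) (hg.diffAt hU hp) (hh.diffAt hU hp) w).symm

theorem pd_inner (hU : IsOpen U) (hg : ContDiffOn ℝ (⊤ : ℕ∞) g U) (hh : ContDiffOn ℝ (⊤ : ℕ∞) h U)
    (hp : p ∈ U) (w : ℝ × ℝ) :
    pd w (fun q => ⟪g q, h q⟫) p = ⟪g p, pd w h p⟫ + ⟪pd w g p, h p⟫ :=
  fderiv_inner_apply (𝕜 := ℝ) (hg.diffAt hU hp) (hh.diffAt hU hp) w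

end PDI

theorem expansion {c : ℝ} (hc : 0 < c) (v1 v2 v3 : E3)
    (h11 : ⟪v1,v1⟫ = c) (h22 : ⟪v2,v2⟫ = c) (h33 : ⟪v3,v3⟫ = 1)
    (h12 : ⟪v1,v2⟫ = 0) (h13 : ⟪v1,v3⟫ = 0) (h23 : ⟪v2,v3⟫ = 0)
    (w z : E3) :
    ⟪w,z⟫ = ⟪w,v1⟫*⟪z,v1⟫/c + ⟪w,v2⟫*⟪z,v2⟫/c + ⟪w,v3⟫*⟪z,v3⟫ := by
  set s := Real.sqrt c with hs
  have hs2 : s^2 = c := Real.sq_sqrt hc.le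
  have hspos : 0 < s := Real.sqrt_pos.2 hc
  have hss : s * s = c := by nlinarith [hs2]
  have hsne : s ≠ 0 := ne_of_gt hspos
  set b : Fin 3 → E3 := ![s⁻¹ • v1, s⁻¹ • v2, v3] with hb
  have hb0 : b 0 = s⁻¹ • v1 := rfl
  have hb1 : b 1 = s⁻¹ • v2 := rfl
  have hb2 : b 2 = v3 := rfl
  have h3 : ∀ i : Fin 3, i = 0 ∨ i = 1 ∨ i = 2 := by decide
  have k11 : ⟪s⁻¹ • v1, s⁻¹ • v1⟫ = 1 := by
    rw [real_inner_smul_left, real_inner_smul_right, h11]; field_simp; linarith [hss]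
  have k22 : ⟪s⁻¹ • v2, s⁻¹ • v2⟫ = 1 := by
    rw [real_inner_smul_left, real_inner_smul_right, h22]; field_simp; linarith [hss]
  have k12 : ⟪s⁻¹ • v1, s⁻¹ • v2⟫ = 0 := by
    rw [real_inner_smul_left, real_inner_smul_right, h12]; ring
  have k21 : ⟪s⁻¹ • v2, s⁻¹ • v1⟫ = 0 := by
    rw [real_inner_smul_left, real_inner_smul_right, real_inner_comm v1 v2, h12]; ring
  have k13 : ⟪s⁻¹ • v1, v3⟫ = 0 := by rw [real_inner_smul_left, h13]; ring
  have k31 : ⟪v3, s⁻¹ • v1⟫ = 0 := by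
    rw [real_inner_smul_right, real_inner_comm v1 v3, h13]; ring
  have k23 : ⟪s⁻¹ • v2, v3⟫ = 0 := by rw [real_inner_smul_left, h23]; ring
  have k32 : ⟪v3, s⁻¹ • v2⟫ = 0 := by
    rw [real_inner_smul_right, real_inner_comm v2 v3, h23]; ring
  have key : ∀ i j : Fin 3, ⟪b i, b j⟫ = if i = j then 1 else 0 := by
    intro i j
    rcases h3 i with rfl|rfl|rfl <;> rcases h3 j with rfl|rfl|rfl
    · rw [hb0, if_pos rfl]; exact k11
    · rw [hb0, hb1, if_neg (by decide)]; exact k12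
    · rw [hb0, hb2, if_neg (by decide)]; exact k13
    · rw [hb1, hb0, if_neg (by decide)]; exact k21
    · rw [hb1, if_pos rfl]; exact k22
    · rw [hb1, hb2, if_neg (by decide)]; exact k23
    · rw [hb2, hb0, if_neg (by decide)]; exact k31
    · rw [hb2, hb1, if_neg (by decide)]; exact k32
    · rw [hb2, if_pos rfl]; exact h33
  have hon : Orthonormal ℝ b := by
    rw [orthonormal_iff_ite]; exact key
  have hsp : ⊤ ≤ Submodule.span ℝ (Set.range b) := by
    rw [hon.linearIndependent.span_eq_top_of_card_eq_finrank]
    simp [finrank_euclideanSpace]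
  let B : OrthonormalBasis (Fin 3) ℝ E3 := OrthonormalBasis.mk hon hsp
  have hP := B.sum_inner_mul_inner w z
  rw [Fin.sum_univ_three] at hP
  have hB : ∀ i, B i = b i := fun i => congrFun (OrthonormalBasis.coe_mk hon hsp) i
  rw [hB 0, hB 1, hB 2, hb0, hb1, hb2] at hP
  rw [← hP, real_inner_smul_left, real_inner_smul_right, real_inner_smul_left,
    real_inner_smul_right, real_inner_comm z v1, real_inner_comm z v2, real_inner_comm z v3,
    ← hss]
  field_simp
  try ring

noncomputable def cross3 (a b : E3) : E3 :=
  (WithLp.equiv 2 (Fin 3 → ℝ)).symm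
    ![a 1 * b 2 - a 2 * b 1, a 2 * b 0 - a 0 * b 2, a 0 * b 1 - a 1 * b 0]

theorem inner_E3 (x y : E3) : ⟪x, y⟫ = x 0 * y 0 + x 1 * y 1 + x 2 * y 2 := by
  simp [PiLp.inner_apply, Fin.sum_univ_three, RCLike.inner_apply, conj_trivial]; ring

theorem cross3_apply (a b : E3) (i : Fin 3) :
    cross3 a b i = ![a 1 * b 2 - a 2 * b 1, a 2 * b 0 - a 0 * b 2, a 0 * b 1 - a 1 * b 0] i :=
  rfl

theorem cross3_inner_left (a b : E3) : ⟪cross3 a b, a⟫ = 0 := by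
  rw [inner_E3]; simp only [cross3_apply]; simp [Fin.isValue]; ring

theorem cross3_inner_right (a b : E3) : ⟪cross3 a b, b⟫ = 0 := by
  rw [inner_E3]; simp only [cross3_apply]; simp [Fin.isValue]; ring

theorem cross3_self_inner (a b : E3) :
    ⟪cross3 a b, cross3 a b⟫ = ⟪a,a⟫ * ⟪b,b⟫ - ⟪a,b⟫^2 := by
  rw [inner_E3, inner_E3, inner_E3, inner_E3]; simp only [cross3_apply]
  simp [Fin.isValue]; ring

theorem coord_contDiffOn {U : Set (ℝ × ℝ)} {g : ℝ × ℝ → E3}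
    (hg : ContDiffOn ℝ (⊤ : ℕ∞) g U) (i : Fin 3) : ContDiffOn ℝ (⊤ : ℕ∞) (fun q => g q i) U :=
  (EuclideanSpace.proj (𝕜 := ℝ) i).contDiff.comp_contDiffOn hg

theorem cross3_contDiffOn {U : Set (ℝ × ℝ)} {g h : ℝ × ℝ → E3}
    (hg : ContDiffOn ℝ (⊤ : ℕ∞) g U) (hh : ContDiffOn ℝ (⊤ : ℕ∞) h U) :
    ContDiffOn ℝ (⊤ : ℕ∞) (fun q => cross3 (g q) (h q)) U := by
  have base : ContDiffOn ℝ (⊤ : ℕ∞) (fun q => (![g q 1 * h q 2 - g q 2 * h q 1,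
      g q 2 * h q 0 - g q 0 * h q 2, g q 0 * h q 1 - g q 1 * h q 0] : Fin 3 → ℝ)) U := by
    apply contDiffOn_pi.2
    intro i
    fin_cases i <;> simp only [Matrix.cons_val_zero, Matrix.cons_val_one, Matrix.head_cons,
      Matrix.cons_val_two, Matrix.tail_cons] <;>
      exact ((coord_contDiffOn hg _).mul (coord_contDiffOn hh _)).sub
        ((coord_contDiffOn hg _).mul (coord_contDiffOn hh _))
  exact (PiLp.continuousLinearEquiv 2 ℝ (fun _ : Fin 3 => ℝ)).symm.contDiff.comp_contDiffOn base

theorem stmt_10 (U : Set (ℝ × ℝ)) (hU : IsOpen U) (hUc : IsConnected U)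
    (f : ℝ × ℝ → E3) (hf : ContDiffOn ℝ (⊤ : ℕ∞) f U)
    (E e : ℝ × ℝ → ℝ) (hE : ContDiffOn ℝ (⊤ : ℕ∞) E U)
    (hEpos : ∀ p ∈ U, 0 < E p)
    (hharm : ∀ p ∈ U, pdu (pdu E) p + pdv (pdv E) p = 0)
    (hI11 : ∀ p ∈ U, ⟪pduV f p, pduV f p⟫ = E p)
    (hI22 : ∀ p ∈ U, ⟪pdvV f p, pdvV f p⟫ = E p)
    (hI12 : ∀ p ∈ U, ⟪pduV f p, pdvV f p⟫ = 0)
    (N : ℝ × ℝ → E3)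
    (hN1 : ∀ p ∈ U, ‖N p‖ = 1)
    (hNu : ∀ p ∈ U, ⟪N p, pduV f p⟫ = 0)
    (hNv : ∀ p ∈ U, ⟪N p, pdvV f p⟫ = 0)
    (hII11 : ∀ p ∈ U, ⟪pduV (pduV f) p, N p⟫ = e p)
    (hII22 : ∀ p ∈ U, ⟪pdvV (pdvV f) p, N p⟫ = e p)
    (hII12 : ∀ p ∈ U, ⟪pdvV (pduV f) p, N p⟫ = 0) :
    (∃ k : ℝ, ∀ p ∈ U, E p = k) ∧
    (∀ p ∈ U,
      -(1 / (2 * E p)) *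
        (pdu (pdu (fun q => Real.log (E q))) p +
         pdv (pdv (fun q => Real.log (E q))) p) = 0) := by
  obtain ⟨p₀, hp₀⟩ := hUc.nonempty
  have icomm : ∀ a b : E3, ⟪a, b⟫ = ⟪b, a⟫ := fun a b => real_inner_comm b a
  -- abbreviations
  set uu : ℝ × ℝ := (1, 0) with huu
  set vv : ℝ × ℝ := (0, 1) with hvv
  -- translate hypotheses into `pd` language (definitional)
  have hI11' : ∀ q ∈ U, ⟪pd uu f q, pd uu f q⟫ = E q := hI11
  have hI22' : ∀ q ∈ U, ⟪pd vv f q, pd vv f q⟫ = E q := hI22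
  have hI12' : ∀ q ∈ U, ⟪pd uu f q, pd vv f q⟫ = (fun _ => (0:ℝ)) q := hI12
  have hI12'' : ∀ q ∈ U, ⟪pd uu f q, pd vv f q⟫ = 0 := hI12
  have hNu' : ∀ q ∈ U, ⟪N q, pd uu f q⟫ = 0 := hNu
  have hNv' : ∀ q ∈ U, ⟪N q, pd vv f q⟫ = 0 := hNv
  have hII11' : ∀ q ∈ U, ⟪pd uu (pd uu f) q, N q⟫ = e q := hII11
  have hII22' : ∀ q ∈ U, ⟪pd vv (pd vv f) q, N q⟫ = e q := hII22
  have hII12' : ∀ q ∈ U, ⟪pd vv (pd uu f) q, N q⟫ = 0 := hII12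
  -- smoothness of derivatives
  have sm_fu : ContDiffOn ℝ (⊤ : ℕ∞) (pd uu f) U := pd_contDiffOn hU hf
  have sm_fv : ContDiffOn ℝ (⊤ : ℕ∞) (pd vv f) U := pd_contDiffOn hU hf
  have sm_fuu : ContDiffOn ℝ (⊤ : ℕ∞) (pd uu (pd uu f)) U := pd_contDiffOn hU sm_fu
  have sm_fuv : ContDiffOn ℝ (⊤ : ℕ∞) (pd vv (pd uu f)) U := pd_contDiffOn hU sm_fu
  have sm_fvu : ContDiffOn ℝ (⊤ : ℕ∞) (pd uu (pd vv f)) U := pd_contDiffOn hU sm_fv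
  have sm_fvv : ContDiffOn ℝ (⊤ : ℕ∞) (pd vv (pd vv f)) U := pd_contDiffOn hU sm_fv
  have sm_Eu : ContDiffOn ℝ (⊤ : ℕ∞) (pd uu E) U := pd_contDiffOn hU hE
  have sm_Ev : ContDiffOn ℝ (⊤ : ℕ∞) (pd vv E) U := pd_contDiffOn hU hE
  have sm_Euu : ContDiffOn ℝ (⊤ : ℕ∞) (pd uu (pd uu E)) U := pd_contDiffOn hU sm_Eu
  have sm_Euv : ContDiffOn ℝ (⊤ : ℕ∞) (pd uu (pd vv E)) U := pd_contDiffOn hU sm_Ev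
  have sm_Evu : ContDiffOn ℝ (⊤ : ℕ∞) (pd vv (pd uu E)) U := pd_contDiffOn hU sm_Eu
  have sm_Evv : ContDiffOn ℝ (⊤ : ℕ∞) (pd vv (pd vv E)) U := pd_contDiffOn hU sm_Ev
  -- symmetry of second derivatives
  have hsymm_f : ∀ q ∈ U, pd uu (pd vv f) q = pd vv (pd uu f) q :=
    fun q hq => pd_symm hU hf hq
  have hsymm_E : ∀ q ∈ U, pd vv (pd uu E) q = pd uu (pd vv E) q :=
    fun q hq => pd_symm hU hE hq
  have hharm' : ∀ q ∈ U, pd uu (pd uu E) q + pd vv (pd vv E) q = (fun _ => (0:ℝ)) q := hharm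
  -- first derivatives of the metric identities
  have hC2 : ∀ q ∈ U, ⟪pd uu (pd uu f) q, pd uu f q⟫ = pd uu E q / 2 := by
    intro q hq
    have h := pd_inner_eq hU sm_fu sm_fu hI11' hq uu
    have := icomm (pd uu f q) (pd uu (pd uu f) q)
    linarith
  have hC3 : ∀ q ∈ U, ⟪pd vv (pd uu f) q, pd uu f q⟫ = pd vv E q / 2 := by
    intro q hq
    have h := pd_inner_eq hU sm_fu sm_fu hI11' hq vv
    have := icomm (pd uu f q) (pd vv (pd uu f) q)
    linarith
  have hC4 : ∀ q ∈ U, ⟪pd vv (pd uu f) q, pd vv f q⟫ = pd uu E q / 2 := by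
    intro q hq
    have h := pd_inner_eq hU sm_fv sm_fv hI22' hq uu
    rw [hsymm_f q hq] at h
    have := icomm (pd vv f q) (pd vv (pd uu f) q)
    linarith
  have hC5 : ∀ q ∈ U, ⟪pd vv (pd vv f) q, pd vv f q⟫ = pd vv E q / 2 := by
    intro q hq
    have h := pd_inner_eq hU sm_fv sm_fv hI22' hq vv
    have := icomm (pd vv f q) (pd vv (pd vv f) q)
    linarith
  have hC6 : ∀ q ∈ U, ⟪pd uu (pd uu f) q, pd vv f q⟫ = -(pd vv E q) / 2 := by
    intro q hq
    have h := pd_inner_eq hU sm_fu sm_fv hI12' hq uu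
    rw [hsymm_f q hq] at h
    rw [pd_zero (0:ℝ)] at h
    have h2 := icomm (pd uu f q) (pd vv (pd uu f) q)
    have h3 := hC3 q hq
    linarith
  have hC7 : ∀ q ∈ U, ⟪pd vv (pd vv f) q, pd uu f q⟫ = -(pd uu E q) / 2 := by
    intro q hq
    have h := pd_inner_eq hU sm_fu sm_fv hI12' hq vv
    rw [pd_zero (0:ℝ)] at h
    have h2 := icomm (pd uu f q) (pd vv (pd vv f) q)
    have h3 := hC4 q hq
    linarith
  -- the smooth unit normal
  set Nh : ℝ × ℝ → E3 := fun q => (E q)⁻¹ • cross3 (pd uu f q) (pd vv f q) with hNh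
  have sm_Nh : ContDiffOn ℝ (⊤ : ℕ∞) Nh U := by
    apply ContDiffOn.fun_smul
    · exact hE.inv (fun q hq => (hEpos q hq).ne')
    · exact cross3_contDiffOn sm_fu sm_fv
  have hNN1 : ∀ q ∈ U, ⟪Nh q, pd uu f q⟫ = 0 := by
    intro q hq
    rw [hNh]
    simp only [real_inner_smul_left]
    rw [cross3_inner_left]
    ring
  have hNN2 : ∀ q ∈ U, ⟪Nh q, pd vv f q⟫ = 0 := by
    intro q hq
    rw [hNh]
    simp only [real_inner_smul_left]
    rw [cross3_inner_right]
    ring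
  have hNN3 : ∀ q ∈ U, ⟪Nh q, Nh q⟫ = 1 := by
    intro q hq
    rw [hNh]
    simp only [real_inner_smul_left, real_inner_smul_right]
    rw [cross3_self_inner, hI11' q hq, hI22' q hq, hI12'' q hq]
    have := (hEpos q hq).ne'
    field_simp
    try ring
  -- expansion in the orthogonal frame
  have hExp : ∀ q ∈ U, ∀ w z : E3,
      ⟪w, z⟫ = ⟪w, pd uu f q⟫ * ⟪z, pd uu f q⟫ / E q
        + ⟪w, pd vv f q⟫ * ⟪z, pd vv f q⟫ / E q
        + ⟪w, Nh q⟫ * ⟪z, Nh q⟫ := by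
    intro q hq w z
    refine expansion (hEpos q hq) _ _ _ (hI11' q hq) (hI22' q hq) (hNN3 q hq) (hI12'' q hq) ?_ ?_ w z
    · rw [icomm]; exact hNN1 q hq
    · rw [icomm]; exact hNN2 q hq
  -- relation between N and Nh
  have hsig : ∀ q ∈ U, ∀ z : E3, ⟪N q, z⟫ = ⟪N q, Nh q⟫ * ⟪z, Nh q⟫ := by
    intro q hq z
    have h := hExp q hq (N q) z
    rw [hNu' q hq, hNv' q hq] at h
    simpa using h
  have hsig2 : ∀ q ∈ U, ⟪N q, Nh q⟫ * ⟪N q, Nh q⟫ = 1 := by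
    intro q hq
    have h := hsig q hq (N q)
    have h2 : ⟪N q, N q⟫ = 1 := by
      rw [real_inner_self_eq_norm_sq, hN1 q hq]; norm_num
    rw [h2] at h
    rw [icomm (N q) (Nh q)] at h ⊢
    linarith
  have hsigne : ∀ q ∈ U, ⟪N q, Nh q⟫ ≠ 0 := by
    intro q hq h0
    have := hsig2 q hq
    rw [h0] at this
    norm_num at this
  -- the smooth second fundamental form coefficient
  set eh : ℝ × ℝ → ℝ := fun q => ⟪pd uu (pd uu f) q, Nh q⟫ with heh
  have heh' : ∀ q, ⟪pd uu (pd uu f) q, Nh q⟫ = eh q := fun q => rfl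
  have sm_eh : ContDiffOn ℝ (⊤ : ℕ∞) eh U := ContDiffOn.inner (𝕜 := ℝ) sm_fuu sm_Nh
  have hD0 : ∀ q ∈ U, e q = ⟪N q, Nh q⟫ * eh q := by
    intro q hq
    rw [← hII11' q hq, icomm, hsig q hq, heh' q]
  have hD1 : ∀ q ∈ U, ⟪pd vv (pd vv f) q, Nh q⟫ = eh q := by
    intro q hq
    have h1 : ⟪N q, Nh q⟫ * ⟪pd vv (pd vv f) q, Nh q⟫ = e q := by
      rw [← hsig q hq, ← icomm]; exact hII22' q hq
    rw [hD0 q hq] at h1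
    exact mul_left_cancel₀ (hsigne q hq) h1
  have hD2 : ∀ q ∈ U, ⟪pd vv (pd uu f) q, Nh q⟫ = 0 := by
    intro q hq
    have h1 : ⟪N q, Nh q⟫ * ⟪pd vv (pd uu f) q, Nh q⟫ = 0 := by
      rw [← hsig q hq, ← icomm]; exact hII12' q hq
    rcases mul_eq_zero.1 h1 with h | h
    · exact absurd h (hsigne q hq)
    · exact h
  -- derivatives of Nh: inner products
  have hP1 : ∀ q ∈ U, ⟪pd uu Nh q, Nh q⟫ = 0 := by
    intro q hq
    have h := pd_inner_eq hU sm_Nh sm_Nh (r := fun _ => (1:ℝ)) hNN3 hq uu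
    rw [pd_zero (1:ℝ)] at h
    have := icomm (Nh q) (pd uu Nh q)
    linarith
  have hP2 : ∀ q ∈ U, ⟪pd vv Nh q, Nh q⟫ = 0 := by
    intro q hq
    have h := pd_inner_eq hU sm_Nh sm_Nh (r := fun _ => (1:ℝ)) hNN3 hq vv
    rw [pd_zero (1:ℝ)] at h
    have := icomm (Nh q) (pd vv Nh q)
    linarith
  have hP3 : ∀ q ∈ U, ⟪pd uu Nh q, pd uu f q⟫ = -(eh q) := by
    intro q hq
    have h := pd_inner_eq hU sm_Nh sm_fu (r := fun _ => (0:ℝ)) hNN1 hq uu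
    rw [pd_zero (0:ℝ)] at h
    have h2 : ⟪Nh q, pd uu (pd uu f) q⟫ = eh q := by rw [icomm]; try exact heh' q
    linarith
  have hP4 : ∀ q ∈ U, ⟪pd vv Nh q, pd uu f q⟫ = 0 := by
    intro q hq
    have h := pd_inner_eq hU sm_Nh sm_fu (r := fun _ => (0:ℝ)) hNN1 hq vv
    rw [pd_zero (0:ℝ)] at h
    have h2 : ⟪Nh q, pd vv (pd uu f) q⟫ = 0 := by rw [icomm]; exact hD2 q hq
    linarith
  have hP5 : ∀ q ∈ U, ⟪pd uu Nh q, pd vv f q⟫ = 0 := by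
    intro q hq
    have h := pd_inner_eq hU sm_Nh sm_fv (r := fun _ => (0:ℝ)) hNN2 hq uu
    rw [pd_zero (0:ℝ)] at h
    have h2 : ⟪Nh q, pd uu (pd vv f) q⟫ = 0 := by
      rw [hsymm_f q hq, icomm]; exact hD2 q hq
    linarith
  have hP6 : ∀ q ∈ U, ⟪pd vv Nh q, pd vv f q⟫ = -(eh q) := by
    intro q hq
    have h := pd_inner_eq hU sm_Nh sm_fv (r := fun _ => (0:ℝ)) hNN2 hq vv
    rw [pd_zero (0:ℝ)] at h
    have h2 : ⟪Nh q, pd vv (pd vv f) q⟫ = eh q := by rw [icomm]; exact hD1 q hq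
    linarith
  -- Codazzi equations
  have hCz2 : ∀ q ∈ U, pd vv eh q = eh q * pd vv E q / E q := by
    intro q hq
    have hEne := (hEpos q hq).ne'
    have h1 : pd vv eh q = ⟪pd uu (pd uu f) q, pd vv Nh q⟫ + ⟪pd vv (pd uu (pd uu f)) q, Nh q⟫ :=
      pd_inner hU sm_fuu sm_Nh hq vv
    have h2 : ⟪pd vv (pd uu f) q, pd uu Nh q⟫ + ⟪pd uu (pd vv (pd uu f)) q, Nh q⟫ = 0 := by
      have h := pd_inner_eq hU sm_fuv sm_Nh (r := fun _ => (0:ℝ)) hD2 hq uu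
      rw [pd_zero (0:ℝ)] at h
      have := icomm (pd vv (pd uu f) q) (pd uu Nh q)
      linarith
    have h3 : pd vv (pd uu (pd uu f)) q = pd uu (pd vv (pd uu f)) q := pd_symm hU sm_fu hq
    have h4 := hExp q hq (pd uu (pd uu f) q) (pd vv Nh q)
    rw [hC2 q hq, hC6 q hq, hP4 q hq, hP6 q hq, hP2 q hq] at h4
    have h5 := hExp q hq (pd vv (pd uu f) q) (pd uu Nh q)
    rw [hC3 q hq, hC4 q hq, hP3 q hq, hP5 q hq, hP1 q hq, hD2 q hq] at h5
    rw [h1, h3, h4]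
    have h6 : ⟪pd uu (pd vv (pd uu f)) q, Nh q⟫
        = -(pd vv E q / 2 * (-(eh q)) / E q + pd uu E q / 2 * 0 / E q + 0 * 0) := by
      rw [h5] at h2; linarith
    rw [h6]
    field_simp
    ring
  have hCz1 : ∀ q ∈ U, pd uu eh q = eh q * pd uu E q / E q := by
    intro q hq
    have hEne := (hEpos q hq).ne'
    have h0 : pd uu eh q = pd uu (fun x => ⟪pd vv (pd vv f) x, Nh x⟫) q :=
      pd_congr hU (fun x hx => (hD1 x hx).symm) hq
    have h1 : pd uu (fun x => ⟪pd vv (pd vv f) x, Nh x⟫) q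
        = ⟪pd vv (pd vv f) q, pd uu Nh q⟫ + ⟪pd uu (pd vv (pd vv f)) q, Nh q⟫ :=
      pd_inner hU sm_fvv sm_Nh hq uu
    have hD2' : ∀ x ∈ U, ⟪pd uu (pd vv f) x, Nh x⟫ = 0 := by
      intro x hx
      rw [hsymm_f x hx]
      exact hD2 x hx
    have h2 : ⟪pd uu (pd vv f) q, pd vv Nh q⟫ + ⟪pd vv (pd uu (pd vv f)) q, Nh q⟫ = 0 := by
      have h := pd_inner_eq hU sm_fvu sm_Nh (r := fun _ => (0:ℝ)) hD2' hq vv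
      rw [pd_zero (0:ℝ)] at h
      have := icomm (pd uu (pd vv f) q) (pd vv Nh q)
      linarith
    have h3 : pd uu (pd vv (pd vv f)) q = pd vv (pd uu (pd vv f)) q := pd_symm hU sm_fv hq
    have h4 := hExp q hq (pd vv (pd vv f) q) (pd uu Nh q)
    rw [hC7 q hq, hC5 q hq, hP3 q hq, hP5 q hq, hP1 q hq, hD1 q hq] at h4
    have h5 := hExp q hq (pd uu (pd vv f) q) (pd vv Nh q)
    rw [hsymm_f q hq] at h5 h2
    rw [hC3 q hq, hC4 q hq, hP4 q hq, hP6 q hq, hD2 q hq, hP2 q hq] at h5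
    rw [h0, h1, h3, h4]
    have h6 : ⟪pd vv (pd uu (pd vv f)) q, Nh q⟫
        = -(pd vv E q / 2 * 0 / E q + pd uu E q / 2 * (-(eh q)) / E q + 0 * 0) := by
      rw [h5] at h2; linarith
    rw [h6]
    field_simp
    ring
  -- Gauss equation
  have hG1 : ∀ q ∈ U,
      ⟪pd uu (pd uu f) q, pd vv (pd vv f) q⟫ = ⟪pd vv (pd uu f) q, pd vv (pd uu f) q⟫ := by
    intro q hq
    have hA : pd vv (fun x => ⟪pd uu (pd uu f) x, pd vv f x⟫) q
        = ⟪pd uu (pd uu f) q, pd vv (pd vv f) q⟫ + ⟪pd vv (pd uu (pd uu f)) q, pd vv f q⟫ :=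
      pd_inner hU sm_fuu sm_fv hq vv
    have hA' : pd vv (fun x => ⟪pd uu (pd uu f) x, pd vv f x⟫) q
        = pd vv (fun x => -(pd vv E x) / 2) q := pd_congr hU hC6 hq
    have hA'' : pd vv (fun x => -(pd vv E x) / 2) q = -(pd vv (pd vv E) q) / 2 := by
      have hd : DifferentiableAt ℝ (pd vv E) q := sm_Ev.diffAt hU hq
      have : (fun x => -(pd vv E x) / 2) = fun x => (-(2:ℝ)⁻¹) * pd vv E x := by
        funext x; ring
      rw [this, pd_const_mul _ hd]
      ring
    have hB : pd uu (fun x => ⟪pd vv (pd uu f) x, pd vv f x⟫) q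
        = ⟪pd vv (pd uu f) q, pd uu (pd vv f) q⟫ + ⟪pd uu (pd vv (pd uu f)) q, pd vv f q⟫ :=
      pd_inner hU sm_fuv sm_fv hq uu
    have hB' : pd uu (fun x => ⟪pd vv (pd uu f) x, pd vv f x⟫) q
        = pd uu (fun x => pd uu E x / 2) q := pd_congr hU hC4 hq
    have hB'' : pd uu (fun x => pd uu E x / 2) q = pd uu (pd uu E) q / 2 := by
      have hd : DifferentiableAt ℝ (pd uu E) q := sm_Eu.diffAt hU hq
      have : (fun x => pd uu E x / 2) = fun x => ((2:ℝ)⁻¹) * pd uu E x := by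
        funext x; ring
      rw [this, pd_const_mul _ hd]
      ring
    have h3 : pd vv (pd uu (pd uu f)) q = pd uu (pd vv (pd uu f)) q := pd_symm hU sm_fu hq
    have h4 : ⟪pd vv (pd uu f) q, pd uu (pd vv f) q⟫ = ⟪pd vv (pd uu f) q, pd vv (pd uu f) q⟫ := by
      rw [hsymm_f q hq]
    have hharmq := hharm' q hq
    rw [hA', hA''] at hA
    rw [hB', hB''] at hB
    rw [h3] at hA
    rw [h4] at hB
    simp only at hharmq
    linarith
  have hG4 : ∀ q ∈ U,
      pd uu E q * pd uu E q + pd vv E q * pd vv E q = 2 * (eh q * eh q) * E q := by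
    intro q hq
    have hEne := (hEpos q hq).ne'
    have h1 := hExp q hq (pd uu (pd uu f) q) (pd vv (pd vv f) q)
    rw [hC2 q hq, hC6 q hq, hC7 q hq, hC5 q hq, heh' q, hD1 q hq] at h1
    have h2 := hExp q hq (pd vv (pd uu f) q) (pd vv (pd uu f) q)
    rw [hC3 q hq, hC4 q hq, hD2 q hq] at h2
    have h3 := hG1 q hq
    rw [h1, h2] at h3
    have ht : E q * (E q)⁻¹ = 1 := mul_inv_cancel₀ hEne
    linear_combination (-2*E q)*h3 - (pd uu E q * pd uu E q + pd vv E q * pd vv E q)*ht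
  -- the square norm of the gradient of E
  set S : ℝ × ℝ → ℝ := fun x => pd uu E x * pd uu E x + pd vv E x * pd vv E x with hS
  have sm_S : ContDiffOn ℝ (⊤ : ℕ∞) S U := (sm_Eu.mul sm_Eu).add (sm_Ev.mul sm_Ev)
  have dSu : ∀ q ∈ U, pd uu S q
      = (pd uu (pd uu E) q * pd uu E q + pd uu E q * pd uu (pd uu E) q)
      + (pd uu (pd vv E) q * pd vv E q + pd vv E q * pd uu (pd vv E) q) := by
    intro q hq
    have d1 : DifferentiableAt ℝ (pd uu E) q := sm_Eu.diffAt hU hq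
    have d2 : DifferentiableAt ℝ (pd vv E) q := sm_Ev.diffAt hU hq
    rw [hS, pd_add (d1.fun_mul d1) (d2.fun_mul d2), pd_mul d1 d1, pd_mul d2 d2]
    try ring
  have dSv : ∀ q ∈ U, pd vv S q
      = (pd vv (pd uu E) q * pd uu E q + pd uu E q * pd vv (pd uu E) q)
      + (pd vv (pd vv E) q * pd vv E q + pd vv E q * pd vv (pd vv E) q) := by
    intro q hq
    have d1 : DifferentiableAt ℝ (pd uu E) q := sm_Eu.diffAt hU hq
    have d2 : DifferentiableAt ℝ (pd vv E) q := sm_Ev.diffAt hU hq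
    rw [hS, pd_add (d1.fun_mul d1) (d2.fun_mul d2), pd_mul d1 d1, pd_mul d2 d2]
    try ring
  have dSu' : ∀ q ∈ U, pd uu S q = 6 * (eh q * eh q) * pd uu E q := by
    intro q hq
    have hEne := (hEpos q hq).ne'
    have deh : DifferentiableAt ℝ eh q := sm_eh.diffAt hU hq
    have dE : DifferentiableAt ℝ E q := hE.diffAt hU hq
    have h0 : pd uu S q = pd uu (fun x => 2 * (eh x * eh x * E x)) q := by
      apply pd_congr hU _ hq
      intro x hx
      rw [hS]
      have := hG4 x hx
      try dsimp only
      linarith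
    rw [h0, pd_const_mul 2 (((deh.fun_mul deh).fun_mul dE)),
      pd_mul (deh.fun_mul deh) dE, pd_mul deh deh, hCz1 q hq]
    field_simp
    ring
  have dSv' : ∀ q ∈ U, pd vv S q = 6 * (eh q * eh q) * pd vv E q := by
    intro q hq
    have hEne := (hEpos q hq).ne'
    have deh : DifferentiableAt ℝ eh q := sm_eh.diffAt hU hq
    have dE : DifferentiableAt ℝ E q := hE.diffAt hU hq
    have h0 : pd vv S q = pd vv (fun x => 2 * (eh x * eh x * E x)) q := by
      apply pd_congr hU _ hq
      intro x hx
      rw [hS]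
      have := hG4 x hx
      try dsimp only
      linarith
    rw [h0, pd_const_mul 2 (((deh.fun_mul deh).fun_mul dE)),
      pd_mul (deh.fun_mul deh) dE, pd_mul deh deh, hCz2 q hq]
    field_simp
    ring
  -- now work at a fixed point
  have hgradzero : ∀ p ∈ U, pd uu E p = 0 ∧ pd vv E p = 0 := by
    intro p hp
    have hEne := (hEpos p hp).ne'
    have hEp := hEpos p hp
    have deh : DifferentiableAt ℝ eh p := sm_eh.diffAt hU hp
    have dE : DifferentiableAt ℝ E p := hE.diffAt hU hp
    have dEu : DifferentiableAt ℝ (pd uu E) p := sm_Eu.diffAt hU hp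
    have dEv : DifferentiableAt ℝ (pd vv E) p := sm_Ev.diffAt hU hp
    have dEuu : DifferentiableAt ℝ (pd uu (pd uu E)) p := sm_Euu.diffAt hU hp
    have dEuv : DifferentiableAt ℝ (pd uu (pd vv E)) p := sm_Euv.diffAt hU hp
    have dEvu : DifferentiableAt ℝ (pd vv (pd uu E)) p := sm_Evu.diffAt hU hp
    have dEvv : DifferentiableAt ℝ (pd vv (pd vv E)) p := sm_Evv.diffAt hU hp
    -- Laplacian of S, first way (via Codazzi/Gauss)
    have L1u : pd uu (pd uu S) p = pd uu (fun x => 6 * (eh x * eh x * pd uu E x)) p := by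
      apply pd_congr hU _ hp
      intro x hx
      have := dSu' x hx
      try dsimp only
      linarith
    have L1v : pd vv (pd vv S) p = pd vv (fun x => 6 * (eh x * eh x * pd vv E x)) p := by
      apply pd_congr hU _ hp
      intro x hx
      have := dSv' x hx
      try dsimp only
      linarith
    have L1u' : pd uu (pd uu S) p
        = 6 * ((pd uu eh p * eh p + eh p * pd uu eh p) * pd uu E p
            + eh p * eh p * pd uu (pd uu E) p) := by
      rw [L1u, pd_const_mul 6 ((deh.fun_mul deh).fun_mul dEu), pd_mul (deh.fun_mul deh) dEu,
        pd_mul deh deh]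
    have L1v' : pd vv (pd vv S) p
        = 6 * ((pd vv eh p * eh p + eh p * pd vv eh p) * pd vv E p
            + eh p * eh p * pd vv (pd vv E) p) := by
      rw [L1v, pd_const_mul 6 ((deh.fun_mul deh).fun_mul dEv), pd_mul (deh.fun_mul deh) dEv,
        pd_mul deh deh]
    -- Laplacian of S, second way (direct)
    have L2u : pd uu (pd uu S) p = pd uu (fun x =>
        (pd uu (pd uu E) x * pd uu E x + pd uu E x * pd uu (pd uu E) x)
        + (pd uu (pd vv E) x * pd vv E x + pd vv E x * pd uu (pd vv E) x)) p := by
      apply pd_congr hU _ hp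
      intro x hx
      exact dSu x hx
    have L2v : pd vv (pd vv S) p = pd vv (fun x =>
        (pd vv (pd uu E) x * pd uu E x + pd uu E x * pd vv (pd uu E) x)
        + (pd vv (pd vv E) x * pd vv E x + pd vv E x * pd vv (pd vv E) x)) p := by
      apply pd_congr hU _ hp
      intro x hx
      exact dSv x hx
    have L2u' : pd uu (pd uu S) p
        = 2 * (pd uu (pd uu E) p * pd uu (pd uu E) p + pd uu E p * pd uu (pd uu (pd uu E)) p)
        + 2 * (pd uu (pd vv E) p * pd uu (pd vv E) p + pd vv E p * pd uu (pd uu (pd vv E)) p)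
        := by
      have dA : DifferentiableAt ℝ (fun x => pd uu (pd uu E) x * pd uu E x
          + pd uu E x * pd uu (pd uu E) x) p := (dEuu.mul dEu).add (dEu.mul dEuu)
      have dB : DifferentiableAt ℝ (fun x => pd uu (pd vv E) x * pd vv E x
          + pd vv E x * pd uu (pd vv E) x) p := (dEuv.mul dEv).add (dEv.mul dEuv)
      rw [L2u, pd_add dA dB, pd_add (dEuu.fun_mul dEu) (dEu.fun_mul dEuu),
        pd_add (dEuv.fun_mul dEv) (dEv.fun_mul dEuv), pd_mul dEuu dEu, pd_mul dEu dEuu,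
        pd_mul dEuv dEv, pd_mul dEv dEuv]
      ring
    have L2v' : pd vv (pd vv S) p
        = 2 * (pd vv (pd uu E) p * pd vv (pd uu E) p + pd uu E p * pd vv (pd vv (pd uu E)) p)
        + 2 * (pd vv (pd vv E) p * pd vv (pd vv E) p + pd vv E p * pd vv (pd vv (pd vv E)) p)
        := by
      have dA : DifferentiableAt ℝ (fun x => pd vv (pd uu E) x * pd uu E x
          + pd uu E x * pd vv (pd uu E) x) p := (dEvu.mul dEu).add (dEu.mul dEvu)
      have dB : DifferentiableAt ℝ (fun x => pd vv (pd vv E) x * pd vv E x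
          + pd vv E x * pd vv (pd vv E) x) p := (dEvv.mul dEv).add (dEv.mul dEvv)
      rw [L2v, pd_add dA dB, pd_add (dEvu.fun_mul dEu) (dEu.fun_mul dEvu),
        pd_add (dEvv.fun_mul dEv) (dEv.fun_mul dEvv), pd_mul dEvu dEu, pd_mul dEu dEvu,
        pd_mul dEvv dEv, pd_mul dEv dEvv]
      ring
    -- vanishing of third-derivative combinations
    have hX1 : pd uu (pd uu (pd uu E)) p + pd vv (pd vv (pd uu E)) p = 0 := by
      have a1 : pd vv (pd vv (pd uu E)) p = pd vv (pd uu (pd vv E)) p :=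
        pd_congr hU hsymm_E hp
      have a2 : pd vv (pd uu (pd vv E)) p = pd uu (pd vv (pd vv E)) p :=
        (pd_symm hU sm_Ev hp).symm
      have a3 : pd uu (pd uu (pd uu E)) p + pd uu (pd vv (pd vv E)) p
          = pd uu (fun x => pd uu (pd uu E) x + pd vv (pd vv E) x) p :=
        (pd_add dEuu dEvv).symm
      have a4 : pd uu (fun x => pd uu (pd uu E) x + pd vv (pd vv E) x) p
          = pd uu (fun _ => (0:ℝ)) p := pd_congr hU hharm' hp
      rw [a1, a2, a3, a4, pd_zero (0:ℝ)]
    have hX2 : pd uu (pd uu (pd vv E)) p + pd vv (pd vv (pd vv E)) p = 0 := by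
      have b1 : pd uu (pd uu (pd vv E)) p = pd uu (pd vv (pd uu E)) p :=
        pd_congr hU (fun x hx => (hsymm_E x hx).symm) hp
      have b2 : pd uu (pd vv (pd uu E)) p = pd vv (pd uu (pd uu E)) p :=
        pd_symm hU sm_Eu hp
      have b3 : pd vv (pd uu (pd uu E)) p + pd vv (pd vv (pd vv E)) p
          = pd vv (fun x => pd uu (pd uu E) x + pd vv (pd vv E) x) p :=
        (pd_add dEuu dEvv).symm
      have b4 : pd vv (fun x => pd uu (pd uu E) x + pd vv (pd vv E) x) p
          = pd vv (fun _ => (0:ℝ)) p := pd_congr hU hharm' hp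
      rw [b1, b2, b3, b4, pd_zero (0:ℝ)]
    -- the key pointwise relations
    have hEvvp : pd vv (pd vv E) p = -(pd uu (pd uu E) p) := by
      have := hharm' p hp
      dsimp only at this
      linarith
    have hEvup : pd vv (pd uu E) p = pd uu (pd vv E) p := hsymm_E p hp
    have eq1 := hG4 p hp
    have eq2 : pd uu (pd uu E) p * pd uu E p + pd uu (pd vv E) p * pd vv E p
        = 3 * (eh p * eh p) * pd uu E p := by
      have h := dSu p hp
      rw [dSu' p hp] at h
      linarith
    have eq3 : pd uu (pd vv E) p * pd uu E p - pd uu (pd uu E) p * pd vv E p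
        = 3 * (eh p * eh p) * pd vv E p := by
      have h := dSv p hp
      rw [dSv' p hp, hEvup, hEvvp] at h
      linarith
    have eq4 : 4 * (pd uu (pd uu E) p * pd uu (pd uu E) p
        + pd uu (pd vv E) p * pd uu (pd vv E) p)
        = 24 * ((eh p * eh p) * (eh p * eh p)) := by
      have hL1 : pd uu (pd uu S) p + pd vv (pd vv S) p
          = 24 * ((eh p * eh p) * (eh p * eh p)) := by
        rw [L1u', L1v', hCz1 p hp, hCz2 p hp, hEvvp]
        have ht : E p * (E p)⁻¹ = 1 := mul_inv_cancel₀ hEne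
        linear_combination (12 * (eh p * eh p) / E p) * eq1
          + (24 * ((eh p * eh p) * (eh p * eh p))) * ht
      have hL2 : pd uu (pd uu S) p + pd vv (pd vv S) p
          = 4 * (pd uu (pd uu E) p * pd uu (pd uu E) p
            + pd uu (pd vv E) p * pd uu (pd vv E) p) := by
        rw [L2u', L2v', hEvup, hEvvp]
        have c1 : pd uu E p * (pd uu (pd uu (pd uu E)) p + pd vv (pd vv (pd uu E)) p) = 0 := by
          rw [hX1]; ring
        have c2 : pd vv E p * (pd uu (pd uu (pd vv E)) p + pd vv (pd vv (pd vv E)) p) = 0 := by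
          rw [hX2]; ring
        linear_combination 2 * c1 + 2 * c2
      exact hL2.symm.trans hL1
    -- algebraic endgame
    have id1 : (pd uu (pd uu E) p * pd uu E p + pd uu (pd vv E) p * pd vv E p)^2
        + (pd uu (pd vv E) p * pd uu E p - pd uu (pd uu E) p * pd vv E p)^2
        = (pd uu (pd uu E) p * pd uu (pd uu E) p + pd uu (pd vv E) p * pd uu (pd vv E) p)
          * (pd uu E p * pd uu E p + pd vv E p * pd vv E p) := by ring
    rw [eq2, eq3, eq1] at id1
    have hW3 : (eh p * eh p) * ((eh p * eh p) * ((eh p * eh p) * E p)) = 0 := by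
      linear_combination (1/6 : ℝ) * id1 + ((eh p * eh p) * E p / 12) * eq4
        - (3/2 : ℝ) * ((eh p * eh p) * (eh p * eh p)) * eq1
    have hW : eh p * eh p = 0 := by
      have hWnn : 0 ≤ eh p * eh p := mul_self_nonneg _
      by_contra hne
      have hW2 : 0 < eh p * eh p := lt_of_le_of_ne hWnn (Ne.symm hne)
      have hpos : 0 < (eh p * eh p) * ((eh p * eh p) * ((eh p * eh p) * E p)) :=
        mul_pos hW2 (mul_pos hW2 (mul_pos hW2 hEp))
      rw [hW3] at hpos
      exact lt_irrefl 0 hpos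
    have hA0 : pd uu E p * pd uu E p + pd vv E p * pd vv E p = 0 := by
      rw [eq1, hW]; ring
    constructor
    · nlinarith [hA0, sq_nonneg (pd uu E p), sq_nonneg (pd vv E p)]
    · nlinarith [hA0, sq_nonneg (pd uu E p), sq_nonneg (pd vv E p)]
  -- the total derivative of E vanishes on U
  have hfderiv0 : ∀ p ∈ U, fderiv ℝ E p = 0 := by
    intro p hp
    obtain ⟨h1, h2⟩ := hgradzero p hp
    refine ContinuousLinearMap.ext fun w => ?_
    obtain ⟨x, y⟩ := w
    have hw : (x, y) = x • uu + y • vv := by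
      rw [huu, hvv]
      simp [Prod.ext_iff]
    rw [hw, map_add, map_smul, map_smul]
    have e1 : fderiv ℝ E p uu = 0 := h1
    have e2 : fderiv ℝ E p vv = 0 := h2
    rw [e1, e2]
    simp
  constructor
  · -- E is constant
    refine ⟨E p₀, ?_⟩
    by_contra hcon
    push_neg at hcon
    obtain ⟨p₁, hp₁, hne⟩ := hcon
    set V : Set (ℝ × ℝ) := {q | q ∈ U ∧ E q = E p₀} with hV
    set W : Set (ℝ × ℝ) := {q | q ∈ U ∧ E q ≠ E p₀} with hW
    have hVopen : IsOpen V := by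
      rw [Metric.isOpen_iff]
      rintro q ⟨hqU, hqE⟩
      obtain ⟨ε, hε, hball⟩ := Metric.isOpen_iff.1 hU q hqU
      refine ⟨ε, hε, ?_⟩
      intro x hx
      have hconst : E x = E q := by
        apply (convex_ball q ε).is_const_of_fderivWithin_eq_zero
          ((hE.mono hball).differentiableOn (by simp))
        · intro z hz
          rw [fderivWithin_of_isOpen Metric.isOpen_ball hz]
          exact hfderiv0 z (hball hz)
        · exact hx
        · exact Metric.mem_ball_self hε
      exact ⟨hball hx, by rw [hconst, hqE]⟩
    have hWopen : IsOpen W := by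
      have : W = U ∩ E ⁻¹' {E p₀}ᶜ := by
        ext q; simp [hW, Set.mem_preimage]
      rw [this]
      exact (hE.continuousOn).isOpen_inter_preimage hU (isOpen_compl_singleton)
    have hcover : U ⊆ V ∪ W := by
      intro q hq
      by_cases h : E q = E p₀
      · exact Or.inl ⟨hq, h⟩
      · exact Or.inr ⟨hq, h⟩
    have hVne : (U ∩ V).Nonempty := ⟨p₀, hp₀, hp₀, rfl⟩
    have hWne : (U ∩ W).Nonempty := ⟨p₁, hp₁, hp₁, hne⟩
    obtain ⟨q, -, ⟨⟨-, hq1⟩, ⟨-, hq2⟩⟩⟩ :=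
      hUc.isPreconnected V W hVopen hWopen hcover hVne hWne
    exact hq2 hq1
  · -- the curvature vanishes
    intro p hp
    have hlog : ∀ q ∈ U, ∀ w : ℝ × ℝ, pd w (fun x => Real.log (E x)) q = 0 := by
      intro q hq w
      have hEd : HasFDerivAt E (fderiv ℝ E q) q := (hE.diffAt hU hq).hasFDerivAt
      have hlogd : HasFDerivAt (fun x => Real.log (E x)) ((E q)⁻¹ • fderiv ℝ E q) q :=
        hEd.log (hEpos q hq).ne'
      show (fderiv ℝ (fun x => Real.log (E x)) q) w = 0
      rw [hlogd.fderiv, hfderiv0 q hq]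
      simp
    have h1 : pd uu (pd uu (fun x => Real.log (E x))) p = 0 := by
      have : pd uu (pd uu (fun x => Real.log (E x))) p = pd uu (fun _ => (0:ℝ)) p :=
        pd_congr hU (fun q hq => hlog q hq uu) hp
      rw [this, pd_zero (0:ℝ)]
    have h2 : pd vv (pd vv (fun x => Real.log (E x))) p = 0 := by
      have : pd vv (pd vv (fun x => Real.log (E x))) p = pd vv (fun _ => (0:ℝ)) p :=
        pd_congr hU (fun q hq => hlog q hq vv) hp
      rw [this, pd_zero (0:ℝ)]
    show -(1 / (2 * E p)) * (pd uu (pd uu (fun q => Real.log (E q))) p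
      + pd vv (pd vv (fun q => Real.log (E q))) p) = 0
    rw [h1, h2]
    ring
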